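/- Let L ≥ 1, let B ∈ ℝ^{L×L} satisfy ∑_{l=0}^{L−1} b_{l,m}² = 1 for every m, let α_l ≥ 0 for all l, and let σ² > 0. Define the density-evolution sequences by sir_m(0) = 0 for all m, and for i ≥ 1: σ_l²(i) = σ² + α_l ∑_{m=0}^{L−1} b_{l,m}²·mmse(sir_m(i−1)) and sir_m(i) = ∑_{l=0}^{L−1} b_{l,m}²/σ_l²(i), where mmse(s) = 1 − ∫_ℝ tanh(s + √s·z)·(2π)^{−1/2} e^{−z²/2} dz. Then for every m, the sequence i ↦ sir_m(i) is nondecreasing, and for every l, the sequence i ↦ σ_l²(i) is nonincreasing for i ≥ 1. -/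

import Mathlib

/-- The minimum mean-squared error of the BPSK-input real AWGN channel with
signal-to-noise ratio `s`. -/
noncomputable def mmse (s : ℝ) : ℝ :=
  1 - ∫ z : ℝ,
    Real.tanh (s + Real.sqrt s * z) * ((Real.sqrt (2 * Real.pi))⁻¹ * Real.exp (-z ^ 2 / 2))

/-!
With `Z` standard Gaussian, `mmse (u ^ 2) = 1 - E[tanh (u ^ 2 + u Z)]`. Integrating
`tanh' = (cosh ^ 2)⁻¹` gives `tanh y = ∫_{c > 0} (𝟙[c < y] - 𝟙[c < -y]) / cosh ^ 2 c`, so by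
Fubini `E[tanh (u ^ 2 + u Z)] = ∫_{c > 0} P(c/u - u < Z ≤ c/u + u) / cosh ^ 2 c`. For `c ≥ 0` the
Gaussian mass of the window `[c/u - u, c/u + u]` increases with `u`: its derivative is
`φ(c/u + u) (1 - c/u²) + φ(c/u - u) (1 + c/u²)`, which is nonnegative since
`|c/u - u| ≤ c/u + u`. Hence `mmse` is antitone on `[0, ∞)`.

The density-evolution updates `sir ↦ σ²` and `σ² ↦ sir` both reverse the order, so one full
step is monotone, and induction from `sir 0 = 0 ≤ sir 1` gives the claim.
-/

open MeasureTheory ProbabilityTheory Real Set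

local notation "φ" => gaussianPDFReal 0 1

lemma gaussianPDFReal_zero_one (z : ℝ) :
    φ z = (√(2 * π))⁻¹ * exp (-z ^ 2 / 2) := by
  simp [gaussianPDFReal]

lemma continuous_gaussianPDFReal_zero_one : Continuous φ := by
  simp only [funext gaussianPDFReal_zero_one]
  fun_prop

lemma gaussianPDFReal_zero_one_neg (z : ℝ) : φ (-z) = φ z := by
  simp [gaussianPDFReal_zero_one]

lemma gaussianPDFReal_zero_one_le {x y : ℝ} (h : x ^ 2 ≤ y ^ 2) : φ y ≤ φ x := by
  simp only [gaussianPDFReal_zero_one]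
  gcongr

noncomputable def gaussianWindow (c u : ℝ) : ℝ := ∫ x in (c / u - u)..(c / u + u), φ x

lemma gaussianWindow_nonneg {c u : ℝ} (hu : 0 ≤ u) : 0 ≤ gaussianWindow c u :=
  intervalIntegral.integral_nonneg (by linarith) fun x _ => gaussianPDFReal_nonneg 0 1 x

lemma gaussianWindow_le_one {c u : ℝ} (hu : 0 ≤ u) : gaussianWindow c u ≤ 1 := by
  rw [gaussianWindow, intervalIntegral.integral_of_le (by linarith),
    ← integral_gaussianPDFReal_eq_one 0 one_ne_zero]
  exact setIntegral_le_integral (integrable_gaussianPDFReal 0 1)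
    (.of_forall (gaussianPDFReal_nonneg 0 1))

lemma gaussianWindow_eq_sub (c u : ℝ) : gaussianWindow c u
    = (∫ x in (0 : ℝ)..(c / u + u), φ x) - ∫ x in (0 : ℝ)..(c / u - u), φ x :=
  (intervalIntegral.integral_interval_sub_left
    (continuous_gaussianPDFReal_zero_one.intervalIntegrable _ _)
    (continuous_gaussianPDFReal_zero_one.intervalIntegrable _ _)).symm

lemma continuous_gaussianWindow_left (u : ℝ) : Continuous fun c => gaussianWindow c u := by
  have hcdf := intervalIntegral.continuous_primitive
    (μ := volume) (fun _ _ => continuous_gaussianPDFReal_zero_one.intervalIntegrable _ _) 0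
  simp only [gaussianWindow_eq_sub]
  exact (hcdf.comp (by fun_prop)).sub (hcdf.comp (by fun_prop))

lemma hasDerivAt_gaussianWindow (c : ℝ) {u : ℝ} (hu : u ≠ 0) :
    HasDerivAt (gaussianWindow c)
      (φ (c / u + u) * (1 - c / u ^ 2) + φ (c / u - u) * (1 + c / u ^ 2)) u := by
  have hcdf (y : ℝ) : HasDerivAt (fun y => ∫ x in (0 : ℝ)..y, φ x) (φ y) y :=
    (continuous_gaussianPDFReal_zero_one.integral_hasStrictDerivAt 0 y).hasDerivAt
  have hinv : HasDerivAt (fun u : ℝ => c / u) (-(c / u ^ 2)) u := by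
    simpa [div_eq_mul_inv, neg_div] using (hasDerivAt_inv hu).const_mul c
  have hupper := (hcdf _).comp u (hinv.add (hasDerivAt_id u))
  have hlower := (hcdf _).comp u (hinv.sub (hasDerivAt_id u))
  rw [funext (gaussianWindow_eq_sub c)]
  refine (hupper.sub hlower).congr_deriv ?_
  change φ (c / u + u) * (-(c / u ^ 2) + 1) - φ (c / u - u) * (-(c / u ^ 2) - 1) = _
  ring

lemma gaussianWindow_monotoneOn {c : ℝ} (hc : 0 ≤ c) : MonotoneOn (gaussianWindow c) (Ici 0) := by
  have hpos : MonotoneOn (gaussianWindow c) (Ioi 0) := by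
    refine monotoneOn_of_hasDerivWithinAt_nonneg (convex_Ioi 0)
      (fun u hu => (hasDerivAt_gaussianWindow c (ne_of_gt hu)).continuousAt.continuousWithinAt)
      (fun u hu => (hasDerivAt_gaussianWindow c (ne_of_gt (interior_subset hu))).hasDerivWithinAt)
      fun u hu => ?_
    rw [interior_Ioi] at hu
    have hu : 0 < u := hu
    have hφ : φ (c / u + u) ≤ φ (c / u - u) := by
      apply gaussianPDFReal_zero_one_le
      nlinarith [div_nonneg hc hu.le]
    have hb := gaussianPDFReal_nonneg 0 1 (c / u + u)
    have hcu : 0 ≤ c / u ^ 2 := by positivity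
    nlinarith
  intro s hs t ht hst
  rcases (mem_Ici.1 hs).eq_or_lt with rfl | hs'
  · simpa [gaussianWindow] using gaussianWindow_nonneg (c := c) ht
  · exact hpos hs' (hs'.trans_le hst) hst

lemma Real.hasDerivAt_tanh (x : ℝ) : HasDerivAt tanh (cosh x ^ 2)⁻¹ x := by
  have h := (hasDerivAt_sinh x).div (hasDerivAt_cosh x) (cosh_pos x).ne'
  rw [show sinh / cosh = tanh from funext fun y => (tanh_eq_sinh_div_cosh y).symm] at h
  refine h.congr_deriv ?_
  rw [← sq, ← sq, cosh_sq_sub_sinh_sq, one_div]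

lemma Real.continuous_tanh : Continuous tanh :=
  continuous_iff_continuousAt.2 fun x => (hasDerivAt_tanh x).continuousAt

lemma continuous_inv_cosh_sq : Continuous fun c : ℝ => (cosh c ^ 2)⁻¹ :=
  (continuous_cosh.pow 2).inv₀ fun c => (pow_pos (cosh_pos c) 2).ne'

lemma inv_cosh_sq_le (c : ℝ) : (cosh c ^ 2)⁻¹ ≤ 4 * exp (-2 * c) := by
  have hcosh : exp c / 2 ≤ cosh c := by
    rw [cosh_eq]; linarith [exp_pos (-c)]
  calc (cosh c ^ 2)⁻¹ ≤ ((exp c / 2) ^ 2)⁻¹ := by gcongr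
    _ = 4 * exp (-2 * c) := by
      rw [div_pow, inv_div, ← exp_nat_mul, mul_comm, div_eq_mul_inv, ← exp_neg]
      push_cast; ring_nf

lemma integrableOn_inv_cosh_sq : IntegrableOn (fun c : ℝ => (cosh c ^ 2)⁻¹) (Ioi 0) :=
  ((exp_neg_integrableOn_Ioi 0 two_pos).const_mul 4).mono'
    continuous_inv_cosh_sq.aestronglyMeasurable
    (.of_forall fun c => by
      rw [norm_of_nonneg (by positivity)]; exact inv_cosh_sq_le c)

noncomputable def signedStep (x c : ℝ) : ℝ :=
  (if c < x then 1 else 0) - (if c < -x then 1 else 0)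

lemma signedStep_neg (x c : ℝ) : signedStep (-x) c = -signedStep x c := by
  simp only [signedStep, neg_neg]; ring

lemma abs_signedStep_le_one (x c : ℝ) : |signedStep x c| ≤ 1 := by
  unfold signedStep; split_ifs <;> norm_num

lemma measurable_signedStep : Measurable (Function.uncurry signedStep) := by
  unfold signedStep Function.uncurry
  refine Measurable.sub ?_ ?_ <;>
    exact Measurable.ite (measurableSet_lt (by fun_prop) (by fun_prop)) measurable_const
      measurable_const

lemma tanh_eq_integral_signedStep (x : ℝ) :
    tanh x = ∫ c in Ioi 0, signedStep x c * (cosh c ^ 2)⁻¹ := by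
  wlog hx : 0 ≤ x generalizing x
  · have h := this (-x) (by linarith)
    simp only [tanh_neg, signedStep_neg, neg_mul, integral_neg] at h
    exact neg_inj.1 h
  have hstep : EqOn (fun c => signedStep x c * (cosh c ^ 2)⁻¹)
      ((Iio x).indicator fun c => (cosh c ^ 2)⁻¹) (Ioi 0) := by
    intro c (hc : 0 < c)
    simp only [signedStep, indicator_apply, mem_Iio, if_neg (show ¬c < -x by linarith)]
    split_ifs <;> simp
  rw [setIntegral_congr_fun measurableSet_Ioi hstep, setIntegral_indicator measurableSet_Iio,
    Ioi_inter_Iio, ← integral_Ioc_eq_integral_Ioo, ← intervalIntegral.integral_of_le hx,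
    intervalIntegral.integral_eq_sub_of_hasDerivAt (fun c _ => hasDerivAt_tanh c)
      (continuous_inv_cosh_sq.intervalIntegrable 0 x), tanh_zero, sub_zero]

lemma integral_signedStep_mul_gaussianPDFReal (c : ℝ) {u : ℝ} (hu : 0 ≤ u) :
    ∫ z, signedStep (u ^ 2 + u * z) c * φ z = gaussianWindow c u := by
  rcases hu.eq_or_lt with rfl | hu
  · -- both sides vanish, the right one because `c / 0 = 0`
    simp [signedStep, gaussianWindow]
  have hφ := integrable_gaussianPDFReal 0 1
  have hlower (z : ℝ) : c < u ^ 2 + u * z ↔ c / u - u < z := by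
    rw [iff_comm, ← mul_lt_mul_iff_of_pos_right hu, show (c / u - u) * u = c - u ^ 2 by field_simp]
    constructor <;> intro h <;> linarith
  have hupper (z : ℝ) : c < -(u ^ 2 + u * z) ↔ z < -(c / u + u) := by
    rw [iff_comm, ← mul_lt_mul_iff_of_pos_right hu,
      show -(c / u + u) * u = -c - u ^ 2 by field_simp; ring]
    constructor <;> intro h <;> linarith
  have hsplit : (fun z => signedStep (u ^ 2 + u * z) c * φ z)
      = fun z => (Ioi (c / u - u)).indicator φ z - (Iio (-(c / u + u))).indicator φ z := by
    funext z
    simp only [signedStep, hlower, hupper, indicator_apply, mem_Ioi, mem_Iio]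
    split_ifs <;> ring
  have hsymm (b : ℝ) : ∫ z in Iio (-b), φ z = ∫ z in Ioi b, φ z := by
    rw [← integral_Iic_eq_integral_Iio, ← integral_comp_neg_Ioi]
    simp only [gaussianPDFReal_zero_one_neg]
  rw [hsplit, integral_sub (hφ.indicator measurableSet_Ioi) (hφ.indicator measurableSet_Iio),
    integral_indicator measurableSet_Ioi, integral_indicator measurableSet_Iio, hsymm,
    intervalIntegral.integral_Ioi_sub_Ioi' hφ.integrableOn hφ.integrableOn, gaussianWindow]

lemma integral_tanh_mul_gaussianPDFReal {u : ℝ} (hu : 0 ≤ u) :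
    ∫ z, tanh (u ^ 2 + u * z) * φ z
      = ∫ c in Ioi 0, gaussianWindow c u * (cosh c ^ 2)⁻¹ := by
  have hint : Integrable (Function.uncurry fun z c =>
      signedStep (u ^ 2 + u * z) c * (cosh c ^ 2)⁻¹ * φ z)
      (volume.prod (volume.restrict (Ioi 0))) := by
    refine ((integrable_gaussianPDFReal 0 1).mul_prod integrableOn_inv_cosh_sq).mono' ?_
      (.of_forall fun p => ?_)
    · exact ((measurable_signedStep.comp
        ((measurable_const.add (measurable_const.mul measurable_fst)).prodMk measurable_snd)).mul
        (continuous_inv_cosh_sq.measurable.comp measurable_snd)).mul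
        ((measurable_gaussianPDFReal 0 1).comp measurable_fst) |>.aestronglyMeasurable
    · simp only [Function.uncurry, norm_mul, norm_inv, norm_pow, norm_eq_abs]
      rw [abs_of_nonneg (gaussianPDFReal_nonneg 0 1 _), abs_of_pos (cosh_pos _)]
      have := abs_signedStep_le_one (u ^ 2 + u * p.1) p.2
      have := gaussianPDFReal_nonneg 0 1 p.1
      calc _ ≤ 1 * (cosh p.2 ^ 2)⁻¹ * φ p.1 := by gcongr
        _ = _ := by ring
  simp_rw [tanh_eq_integral_signedStep, ← integral_mul_const]
  rw [integral_integral_swap hint]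
  refine setIntegral_congr_fun measurableSet_Ioi fun c _ => ?_
  simp_rw [mul_right_comm _ (cosh c ^ 2)⁻¹]
  rw [integral_mul_const, integral_signedStep_mul_gaussianPDFReal c hu]

lemma monotoneOn_integral_tanh_mul_gaussianPDFReal :
    MonotoneOn (fun u => ∫ z, tanh (u ^ 2 + u * z) * φ z) (Ici 0) := by
  intro s (hs : 0 ≤ s) t (ht : 0 ≤ t) hst
  have hint {u : ℝ} (hu : 0 ≤ u) :
      IntegrableOn (fun c => gaussianWindow c u * (cosh c ^ 2)⁻¹) (Ioi 0) := by
    refine integrableOn_inv_cosh_sq.mono'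
      ((continuous_gaussianWindow_left u).mul continuous_inv_cosh_sq).aestronglyMeasurable
      (.of_forall fun c => ?_)
    rw [norm_mul, norm_of_nonneg (gaussianWindow_nonneg hu), norm_of_nonneg (by positivity)]
    exact mul_le_of_le_one_left (by positivity) (gaussianWindow_le_one hu)
  simp only [integral_tanh_mul_gaussianPDFReal hs, integral_tanh_mul_gaussianPDFReal ht]
  refine setIntegral_mono_on (hint hs) (hint ht) measurableSet_Ioi fun c (hc : 0 < c) => ?_
  gcongr
  exact gaussianWindow_monotoneOn hc.le hs ht hst

lemma integrable_tanh_mul_gaussianPDFReal (a b : ℝ) :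
    Integrable fun z => tanh (a + b * z) * φ z := by
  refine (integrable_gaussianPDFReal 0 1).mono'
    ((continuous_tanh.comp (by fun_prop)).mul
      continuous_gaussianPDFReal_zero_one).aestronglyMeasurable
    (.of_forall fun z => ?_)
  rw [norm_mul, norm_of_nonneg (gaussianPDFReal_nonneg 0 1 z)]
  exact mul_le_of_le_one_left (gaussianPDFReal_nonneg 0 1 z) (abs_tanh_lt_one _).le

lemma mmse_eq (s : ℝ) : mmse s = 1 - ∫ z, tanh (s + √s * z) * φ z := by
  simp only [mmse, gaussianPDFReal_zero_one]

lemma mmse_nonneg (s : ℝ) : 0 ≤ mmse s := by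
  rw [mmse_eq, sub_nonneg, ← integral_gaussianPDFReal_eq_one 0 one_ne_zero]
  refine integral_mono (integrable_tanh_mul_gaussianPDFReal _ _)
    (integrable_gaussianPDFReal 0 1) fun z => ?_
  exact mul_le_of_le_one_left (gaussianPDFReal_nonneg 0 1 z) (tanh_lt_one _).le

lemma antitoneOn_mmse : AntitoneOn mmse (Ici 0) := by
  intro s (hs : 0 ≤ s) t (ht : 0 ≤ t) hst
  have h := monotoneOn_integral_tanh_mul_gaussianPDFReal (sqrt_nonneg s) (sqrt_nonneg t)
    (sqrt_le_sqrt hst)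
  simp only [sq_sqrt hs, sq_sqrt ht] at h
  rw [mmse_eq, mmse_eq]
  linarith

theorem densityEvolution_monotone {ι κ : Type*} [Fintype ι] [Fintype κ] (B : ι → κ → ℝ)
    (α : ι → ℝ) (hα : ∀ l, 0 ≤ α l) (σ2 : ℝ) (hσ2 : 0 < σ2)
    (f : ℝ → ℝ) (hf_nonneg : ∀ s, 0 ≤ f s) (hf_anti : AntitoneOn f (Ici 0))
    (sir : ℕ → κ → ℝ) (sigma2 : ℕ → ι → ℝ) (hsir0 : ∀ m, sir 0 m = 0)
    (hsigma2 : ∀ i l, sigma2 (i + 1) l = σ2 + α l * ∑ m, (B l m) ^ 2 * f (sir i m))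
    (hsir : ∀ i m, sir (i + 1) m = ∑ l, (B l m) ^ 2 / sigma2 (i + 1) l) :
    (∀ m, Monotone fun i => sir i m) ∧ ∀ l, AntitoneOn (fun i => sigma2 i l) (Ici 1) := by
  have sigma2_pos (i : ℕ) (l : ι) : 0 < sigma2 (i + 1) l := by
    rw [hsigma2]
    have : 0 ≤ ∑ m, B l m ^ 2 * f (sir i m) :=
      Finset.sum_nonneg fun m _ => mul_nonneg (sq_nonneg _) (hf_nonneg _)
    nlinarith [hα l]
  have sir_nonneg (i : ℕ) (m : κ) : 0 ≤ sir i m := by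
    cases i with
    | zero => exact (hsir0 m).ge
    | succ i =>
      rw [hsir]
      exact Finset.sum_nonneg fun l _ => div_nonneg (sq_nonneg _) (sigma2_pos i l).le
  have sigma2_le_of_sir_le {i : ℕ} (h : ∀ m, sir i m ≤ sir (i + 1) m) (l : ι) :
      sigma2 (i + 2) l ≤ sigma2 (i + 1) l := by
    rw [hsigma2, hsigma2]
    have := hα l
    gcongr with m
    exact hf_anti (sir_nonneg i m) (sir_nonneg (i + 1) m) (h m)
  have sir_le_succ (i : ℕ) : ∀ m, sir i m ≤ sir (i + 1) m := by
    induction i with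
    | zero => exact fun m => (hsir0 m).trans_le (sir_nonneg 1 m)
    | succ i ih =>
      intro m
      rw [hsir, hsir]
      gcongr with l
      · exact sigma2_pos (i + 1) l
      · exact sigma2_le_of_sir_le ih l
  refine ⟨fun m => monotone_nat_of_le_succ fun i => sir_le_succ i m, fun l => ?_⟩
  have hanti : Antitone fun i => sigma2 (i + 1) l :=
    antitone_nat_of_succ_le fun i => sigma2_le_of_sir_le (sir_le_succ i) l
  intro i (hi : 1 ≤ i) j (hj : 1 ≤ j) hij
  obtain ⟨i, rfl⟩ := Nat.exists_eq_add_of_le' hi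
  obtain ⟨j, rfl⟩ := Nat.exists_eq_add_of_le' hj
  exact hanti (Nat.le_of_succ_le_succ hij)

theorem de_monotone_general (L : ℕ) (B : Fin L → Fin L → ℝ)
    (α : Fin L → ℝ) (hα : ∀ l, 0 ≤ α l) (σ2 : ℝ) (hσ2 : 0 < σ2)
    (sir : ℕ → Fin L → ℝ) (sigma2 : ℕ → Fin L → ℝ)
    (hsir0 : ∀ m, sir 0 m = 0)
    (hsigma2 : ∀ i l,
      sigma2 (i + 1) l = σ2 + α l * ∑ m : Fin L, (B l m) ^ 2 * mmse (sir i m))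
    (hsir : ∀ i m, sir (i + 1) m = ∑ l : Fin L, (B l m) ^ 2 / sigma2 (i + 1) l) :
    (∀ m : Fin L, Monotone fun i : ℕ => sir i m) ∧
    (∀ l : Fin L, ∀ i j : ℕ, 1 ≤ i → i ≤ j → sigma2 j l ≤ sigma2 i l) := by
  obtain ⟨hsir_mono, hsigma2_anti⟩ := densityEvolution_monotone B α hα σ2 hσ2 mmse mmse_nonneg
    antitoneOn_mmse sir sigma2 hsir0 hsigma2 hsir
  exact ⟨hsir_mono, fun l i j hi hij => hsigma2_anti l hi (le_trans hi hij) hij⟩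

/-- **Monotonicity of the density-evolution sequences.**
For the coupled DE recursion `sir_m(0) = 0`,
`σ_l²(i) = σ² + α_l ∑_m b_{l,m}²·mmse(sir_m(i−1))`,
`sir_m(i) = ∑_l b_{l,m}²/σ_l²(i)` (for `i ≥ 1`), with unit column square-sums,
`α_l ≥ 0`, and `σ² > 0`, each `i ↦ sir_m(i)` is nondecreasing and each
`i ↦ σ_l²(i)` is nonincreasing for `i ≥ 1`. -/
theorem de_monotone (L : ℕ) (hL : 1 ≤ L) (B : Fin L → Fin L → ℝ)
    (hB : ∀ m : Fin L, ∑ l : Fin L, (B l m) ^ 2 = 1)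
    (α : Fin L → ℝ) (hα : ∀ l, 0 ≤ α l) (σ2 : ℝ) (hσ2 : 0 < σ2)
    (sir : ℕ → Fin L → ℝ) (sigma2 : ℕ → Fin L → ℝ)
    (hsir0 : ∀ m, sir 0 m = 0)
    (hsigma2 : ∀ i l,
      sigma2 (i + 1) l = σ2 + α l * ∑ m : Fin L, (B l m) ^ 2 * mmse (sir i m))
    (hsir : ∀ i m, sir (i + 1) m = ∑ l : Fin L, (B l m) ^ 2 / sigma2 (i + 1) l) :
    (∀ m : Fin L, Monotone fun i : ℕ => sir i m) ∧
    (∀ l : Fin L, ∀ i j : ℕ, 1 ≤ i → i ≤ j → sigma2 j l ≤ sigma2 i l) :=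
  de_monotone_general L B α hα σ2 hσ2 sir sigma2 hsir0 hsigma2 hsir
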